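/- arXiv:1008.4742 — 6 statements merged into one kernel-verified Lean document; each statement's English description precedes it below -/
import Mathlib

section
/- Fix N, n ∈ ℕ, q ∈ ℝ and two words u, v : Fin n → Fin N. Write ι₀ : Fin N → Fin N × Bool for a ↦ (a, false), and for i ∈ Fin n let u⁽ⁱ⁾ : Fin n → Fin N × Bool be the marked word u⁽ⁱ⁾(p) = (u p, decide (p = i)) (the i-th letter is marked, all others unmarked), and similarly v⁽ᶥ⁾. Then ∑_{k ∈ Fin N} ∑_{i ∈ Fin n} ∑_{ι ∈ Fin n} (if u i = k then 1 else 0) · (if v ι = k then 1 else 0) · ⟨u⁽ⁱ⁾, v⁽ᶥ⁾⟩_q = n · ⟨ι₀∘u, ι₀∘v⟩_q, where the q-inner products are taken over the doubled alphabet Fin N × Bool. (This is the paper's identity ∑_k ⟨∂̂_k^{(q)}ξ, ∂̂_k^{(q)}η⟩_q = n⟨ξ,η⟩_q expressed on basis words; it shows that the generator of the Dirichlet form associated to the derivations ∂̂_k^{(q)} is the number operator.) -/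
/-- The number of inversions `i(π) = #{(i,j) : i < j and π(i) > π(j)}` of a permutation of
`Fin n`. -/
def inversions {n : ℕ} (π : Equiv.Perm (Fin n)) : ℕ :=
  (Finset.univ.filter fun p : Fin n × Fin n => p.1 < p.2 ∧ π p.2 < π p.1).card

/-- The `q`-inner product `⟨u,v⟩_q = ∑_{π ∈ Sₙ} q^{i(π)} ∏_p [u p = v (π p)]` of two words
`u v : Fin n → Λ`; this is the Gram form, in an orthonormal basis, of the Bożejko–Speicher
`q`-Fock inner product. -/
noncomputable def qInner {n : ℕ} {Λ : Type*} [DecidableEq Λ] (q : ℝ) (u v : Fin n → Λ) : ℝ :=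
  ∑ π : Equiv.Perm (Fin n),
    q ^ inversions π * ∏ p : Fin n, (if u p = v (π p) then (1 : ℝ) else 0)

/-- The identity `∑_k ⟨∂̂_k^{(q)}ξ, ∂̂_k^{(q)}η⟩_q = n⟨ξ,η⟩_q` on basis words: the generator of
the Dirichlet form associated to the derivations `∂̂_k^{(q)}` is the number operator.  Here
`u⁽ⁱ⁾(p) = (u p, decide (p = i))` is the word `u` with its `i`-th letter marked, and
`ι₀ : a ↦ (a, false)` is the unmarked embedding into the doubled alphabet. -/
theorem qInner_marked_sum {N n : ℕ} (q : ℝ) (u v : Fin n → Fin N) :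
    (∑ k : Fin N, ∑ i : Fin n, ∑ ι : Fin n,
      (if u i = k then (1 : ℝ) else 0) * (if v ι = k then (1 : ℝ) else 0) *
        qInner q (fun p => ((u p, decide (p = i)) : Fin N × Bool))
          (fun p => ((v p, decide (p = ι)) : Fin N × Bool)))
      = (n : ℝ) * qInner q (fun p => ((u p, false) : Fin N × Bool))
          (fun p => ((v p, false) : Fin N × Bool)) := by
  classical
  set P : Equiv.Perm (Fin n) → ℝ :=
    fun π => ∏ p : Fin n, (if u p = v (π p) then (1 : ℝ) else 0) with hP
  have key : ∀ (i ι : Fin n) (π : Equiv.Perm (Fin n)),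
      (∏ p : Fin n, (if ((u p, decide (p = i)) : Fin N × Bool)
          = (v (π p), decide (π p = ι)) then (1:ℝ) else 0))
      = (if π i = ι then (1:ℝ) else 0) * P π := by
    intro i ι π
    by_cases h : π i = ι
    · rw [if_pos h, one_mul, hP]
      refine Finset.prod_congr rfl fun p _ => ?_
      have hiff : (p = i) ↔ (π p = ι) :=
        ⟨fun hp => hp ▸ h, fun hp => π.injective (hp.trans h.symm)⟩
      have : (((u p, decide (p = i)) : Fin N × Bool)
          = (v (π p), decide (π p = ι))) ↔ u p = v (π p) := by
        simp [Prod.ext_iff, decide_eq_decide, hiff]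
      simp [this]
    · rw [if_neg h, zero_mul]
      refine Finset.prod_eq_zero (Finset.mem_univ i) ?_
      simp [Prod.ext_iff, h]
  have habs : ∀ (π : Equiv.Perm (Fin n)) (i : Fin n),
      (if u i = v (π i) then (1:ℝ) else 0) * P π = P π := by
    intro π i
    by_cases h : u i = v (π i)
    · rw [if_pos h, one_mul]
    · rw [if_neg h, zero_mul, hP]
      exact (Finset.prod_eq_zero (Finset.mem_univ i) (by simp [h])).symm
  have hq : qInner q (fun p => ((u p, false) : Fin N × Bool))
      (fun p => ((v p, false) : Fin N × Bool)) = ∑ π : Equiv.Perm (Fin n), q ^ inversions π * P π := by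
    unfold qInner
    refine Finset.sum_congr rfl fun π _ => ?_
    congr 1
    refine Finset.prod_congr rfl fun p _ => ?_
    simp [Prod.ext_iff]
  rw [hq]
  unfold qInner
  simp only [key]
  rw [Finset.sum_comm]
  calc (∑ i : Fin n, ∑ k : Fin N, ∑ ι : Fin n,
        (if u i = k then (1 : ℝ) else 0) * (if v ι = k then (1 : ℝ) else 0) *
          ∑ π : Equiv.Perm (Fin n), q ^ inversions π * ((if π i = ι then (1:ℝ) else 0) * P π))
      = ∑ i : Fin n, ∑ π : Equiv.Perm (Fin n), q ^ inversions π * P π := by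
        refine Finset.sum_congr rfl fun i _ => ?_
        have : ∀ k : Fin N, ∑ ι : Fin n,
            (if u i = k then (1 : ℝ) else 0) * (if v ι = k then (1 : ℝ) else 0) *
              ∑ π : Equiv.Perm (Fin n), q ^ inversions π * ((if π i = ι then (1:ℝ) else 0) * P π)
            = ∑ π : Equiv.Perm (Fin n),
              (if u i = k then (1 : ℝ) else 0) * (if v (π i) = k then (1 : ℝ) else 0) *
                (q ^ inversions π * P π) := by
          intro k
          simp only [Finset.mul_sum]
          rw [Finset.sum_comm]
          refine Finset.sum_congr rfl fun π _ => ?_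
          rw [Finset.sum_eq_single (π i)]
          · simp only [if_pos rfl, ite_true]; ring
          · intro b _ hb
            simp [Ne.symm hb]
          · intro h; exact absurd (Finset.mem_univ _) h
        simp only [this]
        rw [Finset.sum_comm]
        refine Finset.sum_congr rfl fun π _ => ?_
        rw [Finset.sum_eq_single (u i)]
        · rw [if_pos rfl, one_mul]
          by_cases h : v (π i) = u i
          · rw [if_pos h, one_mul]
          · rw [if_neg h, zero_mul]
            have h' : ¬ u i = v (π i) := fun hh => h hh.symm
            have hz : P π = 0 := Finset.prod_eq_zero (Finset.mem_univ i)
              (show (if u i = v (π i) then (1:ℝ) else 0) = 0 from if_neg h')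
            rw [hz, mul_zero]
        · intro b _ hb
          rw [if_neg (Ne.symm hb), zero_mul, zero_mul]
        · intro h; exact absurd (Finset.mem_univ _) h
      _ = (n : ℝ) * ∑ π : Equiv.Perm (Fin n), q ^ inversions π * P π := by
        rw [Finset.sum_const, Finset.card_univ, Fintype.card_fin, nsmul_eq_mul]
end

section
/- For every natural number N ≥ 2 and every real number q with |q|·N ≤ 0.13, one has ν(q,N) := C_{|q|}³ · f(|q|·N) < 1. (This is the paper's claim that its bound ν(q,N) on ‖Ξ_q − 1⊗1‖ in the projective tensor norm is < 1, hence Ξ_q is invertible in M⊗̂M^{op}, e.g. whenever |q|N ≤ 0.13.) -/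
/-- `f(x) = 4x/(1−x) + 5x²/(1−x)² + 2x³/(1−x)³`, the bracketed quantity in the paper's
Corollary on `Ξ_q`. -/
noncomputable def fPaper (x : ℝ) : ℝ :=
  4 * x / (1 - x) + 5 * x ^ 2 / (1 - x) ^ 2 + 2 * x ^ 3 / (1 - x) ^ 3

/-- `C_r = (∏_{m=1}^∞ (1 − r^m))⁻¹`, Bożejko's constant. -/
noncomputable def CPaper (r : ℝ) : ℝ := (∏' m : ℕ, (1 - r ^ (m + 1)))⁻¹

/-- `ν(q,N) = C_{|q|}³ · f(|q|·N)`, the paper's bound on `‖Ξ_q − 1⊗1‖` in the projective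
tensor norm `M ⊗̂ M^{op}`. -/
noncomputable def nuPaper (q : ℝ) (N : ℕ) : ℝ := CPaper |q| ^ 3 * fPaper (|q| * N)

/-- Weierstrass-type inequality: `1 - ∑ aᵢ ≤ ∏ (1 - aᵢ)` for `aᵢ ∈ [0,1]`. -/
lemma weier_aux (s : Finset ℕ) (a : ℕ → ℝ) (h0 : ∀ i, 0 ≤ a i) (h1 : ∀ i, a i ≤ 1) :
    1 - ∑ i ∈ s, a i ≤ ∏ i ∈ s, (1 - a i) := by
  classical
  induction s using Finset.induction_on with
  | empty => simp
  | @insert j t hx ih =>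
    rw [Finset.sum_insert hx, Finset.prod_insert hx]
    have hS : 0 ≤ ∑ i ∈ t, a i := Finset.sum_nonneg fun i _ => h0 i
    nlinarith [h0 j, h1 j]

lemma tprod_ge (r : ℝ) (hr0 : 0 ≤ r) (hr : r ≤ 0.065) :
    (0.87 / 0.935 : ℝ) ≤ ∏' m : ℕ, (1 - r ^ (m + 1)) := by
  have hr1 : r < 1 := by linarith
  by_cases h : Multipliable (fun m : ℕ => (1 - r ^ (m + 1)))
  · refine ge_of_tendsto' h.hasProd fun s => ?_
    have hsummable : Summable (fun m : ℕ => r ^ (m + 1)) := by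
      have := (summable_geometric_of_lt_one hr0 hr1).mul_left r
      refine this.congr fun m => by ring
    have h1 : ∑ i ∈ s, r ^ (i + 1) ≤ ∑' m : ℕ, r ^ (m + 1) :=
      Summable.sum_le_tsum s (fun i _ => pow_nonneg hr0 _) hsummable
    have h2 : (∑' m : ℕ, r ^ (m + 1)) = r / (1 - r) := by
      have : (fun m : ℕ => r ^ (m + 1)) = fun m : ℕ => r * r ^ m := by
        funext m; ring
      rw [this, tsum_mul_left, tsum_geometric_of_lt_one hr0 hr1, div_eq_mul_inv]
    have h3 : r / (1 - r) ≤ 0.065 / 0.935 := by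
      apply div_le_div₀ (by norm_num) hr (by linarith) (by linarith)
    have h4 : 1 - ∑ i ∈ s, r ^ (i + 1) ≤ ∏ i ∈ s, (1 - r ^ (i + 1)) :=
      weier_aux s _ (fun i => pow_nonneg hr0 _)
        (fun i => by
          have : r ^ (i + 1) ≤ 1 := pow_le_one₀ hr0 (le_of_lt hr1)
          linarith)
    have : (0.87 / 0.935 : ℝ) = 1 - 0.065 / 0.935 := by norm_num
    rw [this]
    calc (1 : ℝ) - 0.065 / 0.935 ≤ 1 - r / (1 - r) := by linarith
      _ ≤ 1 - ∑ i ∈ s, r ^ (i + 1) := by rw [← h2]; linarith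
      _ ≤ _ := h4
  · rw [tprod_eq_one_of_not_multipliable h]; norm_num

/-- For every `N ≥ 2` and every real `q` with `|q|·N ≤ 0.13`, one has `ν(q,N) < 1`;
hence `Ξ_q` is invertible in `M ⊗̂ M^{op}`. -/
theorem nuPaper_lt_one (N : ℕ) (hN : 2 ≤ N) (q : ℝ) (hq : |q| * N ≤ 0.13) :
    nuPaper q N < 1 := by
  set r := |q| with hrdef
  have hr0 : 0 ≤ r := abs_nonneg q
  have hN' : (2 : ℝ) ≤ (N : ℝ) := by exact_mod_cast hN
  have hx0 : 0 ≤ r * N := mul_nonneg hr0 (by positivity)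
  have hr : r ≤ 0.065 := by nlinarith
  have hprod := tprod_ge r hr0 hr
  have hprodpos : (0 : ℝ) < ∏' m : ℕ, (1 - r ^ (m + 1)) := lt_of_lt_of_le (by norm_num) hprod
  have hC : CPaper r ≤ (0.87 / 0.935 : ℝ)⁻¹ := by
    unfold CPaper
    exact inv_anti₀ (by norm_num) hprod
  have hC0 : 0 < CPaper r := by unfold CPaper; positivity
  set x := r * N with hxdef
  have hx : x ≤ 0.13 := hq
  have hxlt : 1 - x ≥ 0.87 := by linarith
  have hf : fPaper x ≤ fPaper 0.13 := by
    unfold fPaper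
    gcongr <;> linarith
  have hf0 : 0 ≤ fPaper x := by
    unfold fPaper
    have h1 : (0:ℝ) < 1 - x := by linarith
    positivity
  have key : nuPaper q N ≤ ((0.87 / 0.935 : ℝ)⁻¹) ^ 3 * fPaper 0.13 := by
    unfold nuPaper
    rw [← hrdef, ← hxdef]
    have h1 : CPaper r ^ 3 ≤ ((0.87 / 0.935 : ℝ)⁻¹) ^ 3 :=
      pow_le_pow_left₀ hC0.le hC 3
    exact mul_le_mul h1 hf hf0 (by positivity)
  refine lt_of_le_of_lt key ?_
  unfold fPaper
  norm_num
end

section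
/- For every natural number N ≥ 2 and every real number q with |q|·√N ≤ 0.13, one has ρ(q,N) := C_{|q|}³ · f(|q|·√N) < 1. (This is the paper's claim that its bound ρ(q,N) on ‖Ξ_q − 1⊗1‖ in the von Neumann tensor norm is < 1, hence the invertibility assumption I_q holds, e.g. whenever |q|√N ≤ 0.13.) -/
lemma finprod_lb (a : ℕ → ℝ) (h0 : ∀ i, 0 ≤ a i) (h1 : ∀ i, a i ≤ 1) (s : Finset ℕ) :
    1 - ∑ i ∈ s, a i ≤ ∏ i ∈ s, (1 - a i) := by
  classical
  induction s using Finset.induction_on with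
  | empty => simp
  | insert i s hi ih =>
    rw [Finset.prod_insert hi, Finset.sum_insert hi]
    have hp : (0:ℝ) ≤ ∏ j ∈ s, (1 - a j) :=
      Finset.prod_nonneg fun j _ => by linarith [h1 j]
    have hs : (0:ℝ) ≤ ∑ j ∈ s, a j := Finset.sum_nonneg fun j _ => h0 j
    nlinarith [mul_le_mul_of_nonneg_left ih (by linarith [h1 i] : (0:ℝ) ≤ 1 - a i),
      h0 i, h1 i]

lemma tprod_lb {r : ℝ} (h0 : 0 ≤ r) (h1 : r < 1) :
    1 - r / (1 - r) ≤ ∏' m : ℕ, (1 - r ^ (m + 1)) := by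
  set a : ℕ → ℝ := fun m => r ^ (m + 1) with ha
  have h0a : ∀ m, 0 ≤ a m := fun m => pow_nonneg h0 _
  have h1a : ∀ m, a m ≤ 1 := fun m => pow_le_one₀ h0 h1.le
  have hsum : Summable a := by
    have : Summable fun m : ℕ => r * r ^ m :=
      (summable_geometric_of_lt_one h0 h1).mul_left r
    simpa [ha, pow_succ, mul_comm] using this
  have htsum : ∑' m, a m = r / (1 - r) := by
    have h2 : ∑' m : ℕ, r ^ m = (1 - r)⁻¹ := tsum_geometric_of_lt_one h0 h1
    calc ∑' m, a m = ∑' m : ℕ, r * r ^ m := by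
          simp [ha, pow_succ, mul_comm]
      _ = r * (1 - r)⁻¹ := by rw [tsum_mul_left, h2]
      _ = r / (1 - r) := (div_eq_mul_inv _ _).symm
  have hpartial : ∀ s : Finset ℕ, ∑ i ∈ s, a i ≤ r / (1 - r) := by
    intro s; rw [← htsum]; exact Summable.sum_le_tsum s (fun i _ => h0a i) hsum
  set g : Finset ℕ → ℝ := fun s => ∏ i ∈ s, (1 - a i) with hg
  have hglb : ∀ s, 1 - r / (1 - r) ≤ g s := fun s =>
    le_trans (by linarith [hpartial s]) (finprod_lb a h0a h1a s)
  have hant : Antitone g := by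
    intro s t hst
    have hsd := Finset.prod_sdiff (f := fun i => 1 - a i) hst
    have hle1 : ∏ i ∈ t \ s, (1 - a i) ≤ 1 :=
      Finset.prod_le_one (fun i _ => by linarith [h1a i]) (fun i _ => by linarith [h0a i])
    have hp : (0:ℝ) ≤ g s := Finset.prod_nonneg fun j _ => by linarith [h1a j]
    calc g t = (∏ i ∈ t \ s, (1 - a i)) * g s := hsd.symm
      _ ≤ 1 * g s := mul_le_mul_of_nonneg_right hle1 hp
      _ = g s := one_mul _
  have hbdd : BddBelow (Set.range g) := ⟨1 - r / (1 - r), by rintro x ⟨s, rfl⟩; exact hglb s⟩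
  have htend : Filter.Tendsto g Filter.atTop (nhds (⨅ s, g s)) :=
    tendsto_atTop_ciInf hant hbdd
  have hprod : HasProd (fun m => 1 - a m) (⨅ s, g s) := htend
  rw [hprod.tprod_eq]
  exact le_ciInf hglb



/-- `ρ(q,N) = C_{|q|}³ · f(|q|·√N)`, the paper's bound on `‖Ξ_q − 1⊗1‖` in the von Neumann
tensor norm `M ⊗̄ M^{op}`. -/
noncomputable def rhoPaper (q : ℝ) (N : ℕ) : ℝ := CPaper |q| ^ 3 * fPaper (|q| * Real.sqrt N)

/-- For every `N ≥ 2` and every real `q` with `|q|·√N ≤ 0.13`, one has `ρ(q,N) < 1`;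
hence the invertibility assumption `I_q` holds. -/
theorem rhoPaper_lt_one (N : ℕ) (hN : 2 ≤ N) (q : ℝ) (hq : |q| * Real.sqrt N ≤ 0.13) :
    rhoPaper q N < 1 := by
  set r := |q| with hr
  set t := r * Real.sqrt N with htdef
  have hr0 : 0 ≤ r := abs_nonneg q
  have hsN : Real.sqrt 2 ≤ Real.sqrt N := by
    apply Real.sqrt_le_sqrt
    exact_mod_cast hN
  have hs2 : (1.414 : ℝ) ≤ Real.sqrt 2 := by
    nlinarith [Real.sq_sqrt (by norm_num : (0:ℝ) ≤ 2), Real.sqrt_nonneg 2]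
  have hsN' : (1.414 : ℝ) ≤ Real.sqrt N := le_trans hs2 hsN
  have ht0 : 0 ≤ t := mul_nonneg hr0 (Real.sqrt_nonneg _)
  have ht : t ≤ 0.13 := hq
  have hrsmall : r ≤ 0.092 := by nlinarith
  have hr1 : r < 1 := by linarith
  -- bound on the product
  have hdiv : r / (1 - r) ≤ 0.102 := by
    rw [div_le_iff₀ (by linarith)]; linarith
  have hPlb : (0.898 : ℝ) ≤ ∏' m : ℕ, (1 - r ^ (m + 1)) :=
    le_trans (by linarith) (tprod_lb hr0 hr1)
  have hPpos : (0 : ℝ) < ∏' m : ℕ, (1 - r ^ (m + 1)) := by linarith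
  have hC : CPaper r ≤ 0.898⁻¹ := by
    rw [CPaper]
    exact inv_anti₀ (by norm_num) hPlb
  have hC0 : 0 ≤ CPaper r := by rw [CPaper]; positivity
  -- bound on f
  set u := t / (1 - t) with hu
  have hu0 : 0 ≤ u := div_nonneg ht0 (by linarith)
  have huB : u ≤ 0.1495 := by
    rw [hu, div_le_iff₀ (by linarith)]; linarith
  have hf : fPaper t = 4 * u + 5 * u ^ 2 + 2 * u ^ 3 := by
    rw [fPaper, hu, div_pow, div_pow, mul_div_assoc]; ring
  have hfB : fPaper t ≤ 0.7165 := by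
    rw [hf]; nlinarith
  have hf0 : 0 ≤ fPaper t := by rw [hf]; positivity
  have hC3 : CPaper r ^ 3 ≤ (0.898⁻¹ : ℝ) ^ 3 := pow_le_pow_left₀ hC0 hC 3
  have : rhoPaper q N ≤ (0.898⁻¹ : ℝ) ^ 3 * 0.7165 := by
    rw [rhoPaper]
    exact mul_le_mul hC3 hfB hf0 (by positivity)
  calc rhoPaper q N ≤ (0.898⁻¹ : ℝ) ^ 3 * 0.7165 := this
    _ < 1 := by norm_num
end

section
/- For every real x with 0 ≤ x ≤ 0.13, one has f(x) < (1 − x/2 − x²/2)³. (This is the numerical inequality solved in the paper's Corollary on Ξ_q — which records that it holds up to the threshold |q|N < 0.1386… — and which, combined with the lower bound ∏_{m≥1}(1−|q|^m) ≥ 1 − x/2 − x²/2 valid for |q| ≤ x/2, yields ν(q,N) < 1 for N ≥ 2 and |q|N ≤ 0.13.) -/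
/-- For every real `x` with `0 ≤ x ≤ 0.13`, one has `f(x) < (1 − x/2 − x²/2)³`. -/
theorem fPaper_lt (x : ℝ) (hx0 : 0 ≤ x) (hx1 : x ≤ 0.13) :
    fPaper x < (1 - x / 2 - x ^ 2 / 2) ^ 3 := by
  have h1 : (0:ℝ) < 1 - x := by nlinarith
  have h3 : (0:ℝ) < (1 - x) ^ 3 := by positivity
  have hne : (1 - x) ≠ 0 := ne_of_gt h1
  have key : fPaper x * (1 - x) ^ 3
      = 4 * x * (1 - x) ^ 2 + 5 * x ^ 2 * (1 - x) + 2 * x ^ 3 := by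
    unfold fPaper
    field_simp
  rw [← mul_lt_mul_iff_of_pos_right h3, key]
  have h4 : (0:ℝ) ≤ 0.13 - x := by linarith
  nlinarith [mul_nonneg h4 h4, mul_nonneg (mul_nonneg hx0 hx0) h4,
    mul_nonneg (mul_nonneg (mul_nonneg hx0 hx0) hx0) h4,
    mul_nonneg (mul_nonneg (mul_nonneg (mul_nonneg hx0 hx0) hx0) hx0) h4,
    pow_nonneg hx0 6, pow_nonneg hx0 7, pow_nonneg hx0 9,
    mul_nonneg (pow_nonneg hx0 6) h4, mul_nonneg (pow_nonneg hx0 8) h4]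
end

section
/- Let N ∈ ℕ, A = FreeAlgebra ℂ (Fin N), and fix an arbitrary element Ξ of the algebraic tensor square A⊗A. For j ∈ Fin N let δ_j : A → A⊗A be the unique linear map with δ_j(1) = 0, δ_j(X_a) = (if a = j then Ξ else 0), satisfying the Leibniz rule δ_j(PQ) = δ_j(P)·(1⊗Q) + (P⊗1)·δ_j(Q). Then for all i, j ∈ Fin N and all P ∈ A: (δ_j⊗id)(∂_i(P)) − (id⊗∂_i)(δ_j(P)) = − ∂_j(P) # ((id⊗∂_i)(Ξ)), and (∂_i⊗id)(δ_j(P)) − (id⊗δ_j)(∂_i(P)) = ∂_j(P) # ((∂_i⊗id)(Ξ)). (This is the algebraic content of the paper's Lemma stating that the deformed difference quotients ∂^{(q,Q)} — the case Ξ = Ξ_q^Q — are almost coassociative with respect to the free difference quotients ∂, with defect C given by C_{i,j}^k = [j=k](∂_i⊗id)(Ξ) and C_{j,i}^k = −[j=k](id⊗∂_i)(Ξ).) -/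
open scoped TensorProduct

set_option maxHeartbeats 1000000
set_option synthInstance.maxHeartbeats 400000
set_option maxRecDepth 8000


/-- For a linear map `d : A → A⊗A`, the induced map `d⊗id : A⊗A → A⊗A⊗A`
(`rTensor` composed with the associativity isomorphism). -/
noncomputable def tenR {A : Type*} [Ring A] [Algebra ℂ A] (d : A →ₗ[ℂ] A ⊗[ℂ] A) :
    A ⊗[ℂ] A →ₗ[ℂ] A ⊗[ℂ] (A ⊗[ℂ] A) :=
  (TensorProduct.assoc ℂ A A A).toLinearMap ∘ₗ LinearMap.rTensor A d

/-- For a linear map `d : A → A⊗A`, the induced map `id⊗d : A⊗A → A⊗A⊗A` (`lTensor`). -/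
noncomputable def tenL {A : Type*} [Ring A] [Algebra ℂ A] (d : A →ₗ[ℂ] A ⊗[ℂ] A) :
    A ⊗[ℂ] A →ₗ[ℂ] A ⊗[ℂ] (A ⊗[ℂ] A) :=
  LinearMap.lTensor A d

section aux
variable {A : Type*} [Ring A] [Algebra ℂ A]

lemma tenR_tmul (d : A →ₗ[ℂ] A ⊗[ℂ] A) (x y : A) :
    tenR d (x ⊗ₜ[ℂ] y) = (TensorProduct.assoc ℂ A A A) (d x ⊗ₜ[ℂ] y) := rfl

lemma tenL_tmul (d : A →ₗ[ℂ] A ⊗[ℂ] A) (x y : A) :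
    tenL d (x ⊗ₜ[ℂ] y) = x ⊗ₜ[ℂ] d y := rfl

noncomputable def kappa : (A ⊗[ℂ] A) →ₗ[ℂ] (A ⊗[ℂ] A) →ₗ[ℂ] (A ⊗[ℂ] (A ⊗[ℂ] A)) :=
  ((LinearMap.mul ℂ (A ⊗[ℂ] (A ⊗[ℂ] A))).compl₂ (TensorProduct.mk ℂ A (A ⊗[ℂ] A) 1)).comp
    (LinearMap.lTensor A ((TensorProduct.mk ℂ A A).flip 1))

lemma kappa_tmul (a b x y : A) :
    kappa (a ⊗ₜ[ℂ] b) (x ⊗ₜ[ℂ] y) = a ⊗ₜ[ℂ] ((b * x) ⊗ₜ[ℂ] y) := by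
  simp [kappa, Algebra.TensorProduct.tmul_mul_tmul]

lemma tenR_mul_right (d : A →ₗ[ℂ] A ⊗[ℂ] A) (Q : A) (u : A ⊗[ℂ] A) :
    tenR d (u * ((1:A) ⊗ₜ[ℂ] Q)) = tenR d u * ((1:A) ⊗ₜ[ℂ] ((1:A) ⊗ₜ[ℂ] Q)) := by
  induction u using TensorProduct.induction_on with
  | zero => simp
  | tmul x y =>
      rw [Algebra.TensorProduct.tmul_mul_tmul, mul_one, tenR_tmul, tenR_tmul]
      generalize d x = w
      induction w using TensorProduct.induction_on with
      | zero => simp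
      | tmul a b => simp [TensorProduct.assoc_tmul, Algebra.TensorProduct.tmul_mul_tmul]
      | add w₁ w₂ h₁ h₂ => simp [TensorProduct.add_tmul, map_add, add_mul, h₁, h₂]
  | add u₁ u₂ h₁ h₂ => simp [add_mul, map_add, h₁, h₂]

lemma tenR_mul_left (d : A →ₗ[ℂ] A ⊗[ℂ] A)
    (hd : ∀ P Q : A, d (P * Q) = d P * ((1:A) ⊗ₜ[ℂ] Q) + (P ⊗ₜ[ℂ] (1:A)) * d Q)
    (P : A) (u : A ⊗[ℂ] A) :
    tenR d ((P ⊗ₜ[ℂ] (1:A)) * u)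
      = (P ⊗ₜ[ℂ] ((1:A) ⊗ₜ[ℂ] (1:A))) * tenR d u + kappa (d P) u := by
  induction u using TensorProduct.induction_on with
  | zero => simp
  | tmul x y =>
      rw [Algebra.TensorProduct.tmul_mul_tmul, one_mul, tenR_tmul, tenR_tmul, hd,
        TensorProduct.add_tmul, map_add]
      have h1 : ∀ w : A ⊗[ℂ] A, (TensorProduct.assoc ℂ A A A) ((w * ((1:A) ⊗ₜ[ℂ] x)) ⊗ₜ[ℂ] y)
          = kappa w (x ⊗ₜ[ℂ] y) := by
        intro w
        induction w using TensorProduct.induction_on with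
        | zero => simp
        | tmul a b =>
            simp [Algebra.TensorProduct.tmul_mul_tmul, TensorProduct.assoc_tmul, kappa_tmul]
        | add w₁ w₂ h₁ h₂ => simp [add_mul, TensorProduct.add_tmul, map_add, h₁, h₂]
      have h2 : ∀ w : A ⊗[ℂ] A, (TensorProduct.assoc ℂ A A A) (((P ⊗ₜ[ℂ] (1:A)) * w) ⊗ₜ[ℂ] y)
          = (P ⊗ₜ[ℂ] ((1:A) ⊗ₜ[ℂ] (1:A))) * (TensorProduct.assoc ℂ A A A) (w ⊗ₜ[ℂ] y) := by
        intro w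
        induction w using TensorProduct.induction_on with
        | zero => simp
        | tmul a b =>
            simp [Algebra.TensorProduct.tmul_mul_tmul, TensorProduct.assoc_tmul]
        | add w₁ w₂ h₁ h₂ => simp [mul_add, TensorProduct.add_tmul, map_add, h₁, h₂]
      rw [h1, h2, add_comm]
  | add u₁ u₂ h₁ h₂ => simp only [mul_add, map_add, LinearMap.add_apply, h₁, h₂]; abel

lemma tenL_mul_right (d : A →ₗ[ℂ] A ⊗[ℂ] A)
    (hd : ∀ P Q : A, d (P * Q) = d P * ((1:A) ⊗ₜ[ℂ] Q) + (P ⊗ₜ[ℂ] (1:A)) * d Q)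
    (Q : A) (u : A ⊗[ℂ] A) :
    tenL d (u * ((1:A) ⊗ₜ[ℂ] Q))
      = tenL d u * ((1:A) ⊗ₜ[ℂ] ((1:A) ⊗ₜ[ℂ] Q)) + kappa u (d Q) := by
  induction u using TensorProduct.induction_on with
  | zero => simp
  | tmul x y =>
      rw [Algebra.TensorProduct.tmul_mul_tmul, mul_one, tenL_tmul, tenL_tmul, hd,
        TensorProduct.tmul_add]
      have h1 : ∀ w : A ⊗[ℂ] A, (x ⊗ₜ[ℂ] (w * ((1:A) ⊗ₜ[ℂ] Q)) : A ⊗[ℂ] (A ⊗[ℂ] A))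
          = (x ⊗ₜ[ℂ] w) * ((1:A) ⊗ₜ[ℂ] ((1:A) ⊗ₜ[ℂ] Q)) := by
        intro w
        induction w using TensorProduct.induction_on with
        | zero => simp
        | tmul a b => simp [Algebra.TensorProduct.tmul_mul_tmul]
        | add w₁ w₂ h₁ h₂ => simp only [add_mul, TensorProduct.tmul_add, h₁, h₂]
      have h2 : ∀ w : A ⊗[ℂ] A, (x ⊗ₜ[ℂ] ((y ⊗ₜ[ℂ] (1:A)) * w) : A ⊗[ℂ] (A ⊗[ℂ] A))
          = kappa (x ⊗ₜ[ℂ] y) w := by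
        intro w
        induction w using TensorProduct.induction_on with
        | zero => simp
        | tmul a b => simp [Algebra.TensorProduct.tmul_mul_tmul, kappa_tmul]
        | add w₁ w₂ h₁ h₂ => simp [mul_add, TensorProduct.tmul_add, map_add, h₁, h₂]
      rw [h1, h2]
  | add u₁ u₂ h₁ h₂ => simp only [add_mul, map_add, LinearMap.add_apply, h₁, h₂]; abel

lemma tenL_mul_left (d : A →ₗ[ℂ] A ⊗[ℂ] A) (P : A) (u : A ⊗[ℂ] A) :
    tenL d ((P ⊗ₜ[ℂ] (1:A)) * u) = (P ⊗ₜ[ℂ] ((1:A) ⊗ₜ[ℂ] (1:A))) * tenL d u := by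
  induction u using TensorProduct.induction_on with
  | zero => simp
  | tmul x y =>
      rw [Algebra.TensorProduct.tmul_mul_tmul, one_mul, tenL_tmul, tenL_tmul]
      generalize d y = w
      induction w using TensorProduct.induction_on with
      | zero => simp
      | tmul a b => simp [Algebra.TensorProduct.tmul_mul_tmul]
      | add w₁ w₂ h₁ h₂ => simp [mul_add, TensorProduct.tmul_add, h₁, h₂]
  | add u₁ u₂ h₁ h₂ => simp [mul_add, map_add, h₁, h₂]

variable (hash : (A ⊗[ℂ] A) →ₗ[ℂ] (A ⊗[ℂ] (A ⊗[ℂ] A)) →ₗ[ℂ] (A ⊗[ℂ] (A ⊗[ℂ] A)))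
variable (hhash : ∀ x y d e f : A,
      hash (x ⊗ₜ[ℂ] y) (d ⊗ₜ[ℂ] (e ⊗ₜ[ℂ] f)) = (x * d) ⊗ₜ[ℂ] (e ⊗ₜ[ℂ] (f * y)))

include hhash

lemma hash_one (z : A ⊗[ℂ] (A ⊗[ℂ] A)) : hash ((1:A) ⊗ₜ[ℂ] (1:A)) z = z := by
  induction z using TensorProduct.induction_on with
  | zero => simp
  | tmul dd w =>
      induction w using TensorProduct.induction_on with
      | zero => simp [TensorProduct.tmul_zero]
      | tmul e f => rw [hhash]; simp
      | add w₁ w₂ h₁ h₂ => simp only [TensorProduct.tmul_add, map_add, h₁, h₂]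
  | add z₁ z₂ h₁ h₂ => simp only [map_add, h₁, h₂]

lemma hash_mul_right (Q : A) (u : A ⊗[ℂ] A) (z : A ⊗[ℂ] (A ⊗[ℂ] A)) :
    hash (u * ((1:A) ⊗ₜ[ℂ] Q)) z = hash u z * ((1:A) ⊗ₜ[ℂ] ((1:A) ⊗ₜ[ℂ] Q)) := by
  induction u using TensorProduct.induction_on with
  | zero => simp
  | tmul x y =>
      rw [Algebra.TensorProduct.tmul_mul_tmul, mul_one]
      induction z using TensorProduct.induction_on with
      | zero => simp
      | tmul dd w =>
          induction w using TensorProduct.induction_on with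
          | zero => simp [TensorProduct.tmul_zero]
          | tmul e f =>
              rw [hhash, hhash]
              simp [Algebra.TensorProduct.tmul_mul_tmul, mul_assoc]
          | add w₁ w₂ h₁ h₂ =>
              simp only [TensorProduct.tmul_add, map_add, add_mul, h₁, h₂]
      | add z₁ z₂ h₁ h₂ => simp only [map_add, add_mul, h₁, h₂]
  | add u₁ u₂ h₁ h₂ =>
      simp only [add_mul, map_add, LinearMap.add_apply, h₁, h₂]

lemma hash_mul_left (P : A) (u : A ⊗[ℂ] A) (z : A ⊗[ℂ] (A ⊗[ℂ] A)) :
    hash ((P ⊗ₜ[ℂ] (1:A)) * u) z = (P ⊗ₜ[ℂ] ((1:A) ⊗ₜ[ℂ] (1:A))) * hash u z := by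
  induction u using TensorProduct.induction_on with
  | zero => simp
  | tmul x y =>
      rw [Algebra.TensorProduct.tmul_mul_tmul, one_mul]
      induction z using TensorProduct.induction_on with
      | zero => simp
      | tmul dd w =>
          induction w using TensorProduct.induction_on with
          | zero => simp [TensorProduct.tmul_zero]
          | tmul e f =>
              rw [hhash, hhash]
              simp [Algebra.TensorProduct.tmul_mul_tmul, mul_assoc]
          | add w₁ w₂ h₁ h₂ =>
              simp only [TensorProduct.tmul_add, map_add, mul_add, h₁, h₂]
      | add z₁ z₂ h₁ h₂ => simp only [map_add, mul_add, h₁, h₂]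
  | add u₁ u₂ h₁ h₂ =>
      simp only [mul_add, map_add, LinearMap.add_apply, h₁, h₂]

end aux

/-- Almost coassociativity of the deformed difference quotients `δ_j` (the unique derivations
with `δ_j(X_a) = [a = j]·Ξ`) with respect to the free difference quotients `∂_i`, with defect
determined by `Ξ`: for all `P`,
`(δ_j⊗id)(∂_i P) − (id⊗∂_i)(δ_j P) = − ∂_j(P) # ((id⊗∂_i)(Ξ))` and
`(∂_i⊗id)(δ_j P) − (id⊗δ_j)(∂_i P) = ∂_j(P) # ((∂_i⊗id)(Ξ))`,
where `#` is the bilinear operation with `(x⊗y)#(d⊗e⊗f) = (xd)⊗e⊗(fy)`. -/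
theorem deformed_almost_coassociative {N : ℕ}
    (Ξ : FreeAlgebra ℂ (Fin N) ⊗[ℂ] FreeAlgebra ℂ (Fin N))
    -- the free difference quotients ∂_i
    (Dp : Fin N → (FreeAlgebra ℂ (Fin N) →ₗ[ℂ] FreeAlgebra ℂ (Fin N) ⊗[ℂ] FreeAlgebra ℂ (Fin N)))
    (hP1 : ∀ i, Dp i 1 = 0)
    (hPX : ∀ i a, Dp i (FreeAlgebra.ι ℂ a) =
      if a = i then (1 : FreeAlgebra ℂ (Fin N)) ⊗ₜ[ℂ] (1 : FreeAlgebra ℂ (Fin N)) else 0)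
    (hPLeib : ∀ i (P Q : FreeAlgebra ℂ (Fin N)), Dp i (P * Q) =
      Dp i P * ((1 : FreeAlgebra ℂ (Fin N)) ⊗ₜ[ℂ] Q)
        + (P ⊗ₜ[ℂ] (1 : FreeAlgebra ℂ (Fin N))) * Dp i Q)
    -- the deformed difference quotients δ_j, sending X_a to [a = j]·Ξ
    (Dδ : Fin N → (FreeAlgebra ℂ (Fin N) →ₗ[ℂ] FreeAlgebra ℂ (Fin N) ⊗[ℂ] FreeAlgebra ℂ (Fin N)))
    (hD1 : ∀ j, Dδ j 1 = 0)
    (hDX : ∀ j a, Dδ j (FreeAlgebra.ι ℂ a) = if a = j then Ξ else 0)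
    (hDLeib : ∀ j (P Q : FreeAlgebra ℂ (Fin N)), Dδ j (P * Q) =
      Dδ j P * ((1 : FreeAlgebra ℂ (Fin N)) ⊗ₜ[ℂ] Q)
        + (P ⊗ₜ[ℂ] (1 : FreeAlgebra ℂ (Fin N))) * Dδ j Q)
    -- the bilinear operation #
    (hash : (FreeAlgebra ℂ (Fin N) ⊗[ℂ] FreeAlgebra ℂ (Fin N)) →ₗ[ℂ]
      (FreeAlgebra ℂ (Fin N) ⊗[ℂ] (FreeAlgebra ℂ (Fin N) ⊗[ℂ] FreeAlgebra ℂ (Fin N))) →ₗ[ℂ]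
      (FreeAlgebra ℂ (Fin N) ⊗[ℂ] (FreeAlgebra ℂ (Fin N) ⊗[ℂ] FreeAlgebra ℂ (Fin N))))
    (hhash : ∀ x y d e f : FreeAlgebra ℂ (Fin N),
      hash (x ⊗ₜ[ℂ] y) (d ⊗ₜ[ℂ] (e ⊗ₜ[ℂ] f)) = (x * d) ⊗ₜ[ℂ] (e ⊗ₜ[ℂ] (f * y)))
    (i j : Fin N) (P : FreeAlgebra ℂ (Fin N)) :
    tenR (Dδ j) (Dp i P) - tenL (Dp i) (Dδ j P) = - hash (Dp j P) (tenL (Dp i) Ξ) ∧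
    tenR (Dp i) (Dδ j P) - tenL (Dδ j) (Dp i P) = hash (Dp j P) (tenR (Dp i) Ξ) := by

  induction P using FreeAlgebra.induction with
  | grade0 r =>
      have z : ∀ (d : FreeAlgebra ℂ (Fin N) →ₗ[ℂ]
          FreeAlgebra ℂ (Fin N) ⊗[ℂ] FreeAlgebra ℂ (Fin N)), d 1 = 0 →
          d (algebraMap ℂ (FreeAlgebra ℂ (Fin N)) r) = 0 := fun d h => by
        rw [Algebra.algebraMap_eq_smul_one, map_smul, h, smul_zero]
      rw [z _ (hP1 i), z _ (hD1 j), z _ (hP1 j)]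
      simp
  | grade1 a =>
      have eR : tenR (Dδ j) ((1 : FreeAlgebra ℂ (Fin N)) ⊗ₜ[ℂ] 1) = 0 := by
        rw [tenR_tmul, hD1, TensorProduct.zero_tmul, map_zero]
      have eL : tenL (Dδ j) ((1 : FreeAlgebra ℂ (Fin N)) ⊗ₜ[ℂ] 1) = 0 := by
        rw [tenL_tmul, hD1, TensorProduct.tmul_zero]
      have hone := hash_one hash hhash
      rw [hPX i a, hPX j a, hDX j a]
      by_cases hai : a = i <;> by_cases haj : a = j
      · rw [if_pos hai, if_pos haj, if_pos haj]
        exact ⟨by rw [eR, hone, zero_sub], by rw [eL, hone, sub_zero]⟩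
      · rw [if_pos hai, if_neg haj, if_neg haj]
        constructor <;> simp [eR, eL]
      · rw [if_neg hai, if_pos haj, if_pos haj]
        exact ⟨by rw [hone]; simp, by rw [hone]; simp⟩
      · rw [if_neg hai, if_neg haj, if_neg haj]
        constructor <;> simp
  | mul P Q ihP ihQ =>
      obtain ⟨iP1, iP2⟩ := ihP
      obtain ⟨iQ1, iQ2⟩ := ihQ
      constructor
      · rw [hPLeib i P Q, hDLeib j P Q, hPLeib j P Q]
        simp only [map_add, LinearMap.add_apply]
        rw [tenR_mul_right, tenR_mul_left (Dδ j) (hDLeib j),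
          tenL_mul_right (Dp i) (hPLeib i), tenL_mul_left,
          hash_mul_right hash hhash, hash_mul_left hash hhash,
          sub_eq_iff_eq_add.mp iP1, sub_eq_iff_eq_add.mp iQ1]
        noncomm_ring
        simp only [smul_mul_assoc, mul_smul_comm]
      · rw [hPLeib i P Q, hDLeib j P Q, hPLeib j P Q]
        simp only [map_add, LinearMap.add_apply]
        rw [tenR_mul_right, tenR_mul_left (Dp i) (hPLeib i),
          tenL_mul_right (Dδ j) (hDLeib j), tenL_mul_left,
          hash_mul_right hash hhash, hash_mul_left hash hhash,
          sub_eq_iff_eq_add.mp iP2, sub_eq_iff_eq_add.mp iQ2]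
        noncomm_ring
  | add P Q ihP ihQ =>
      obtain ⟨iP1, iP2⟩ := ihP
      obtain ⟨iQ1, iQ2⟩ := ihQ
      constructor
      · simp only [map_add, LinearMap.add_apply]
        rw [sub_eq_iff_eq_add.mp iP1, sub_eq_iff_eq_add.mp iQ1]
        abel
      · simp only [map_add, LinearMap.add_apply]
        rw [sub_eq_iff_eq_add.mp iP2, sub_eq_iff_eq_add.mp iQ2]
        abel
end

section
/- Let N ∈ ℕ, q ∈ ℝ, and let Λ = Fin N ⊕ Fin N (an 'unprimed' and a 'primed' copy of the alphabet), A = FreeAlgebra ℂ Λ, and ψ : List Λ → A the Wick polynomials. For k ∈ Fin N let D_k : A → A be the unique derivation (D_k(PQ) = D_k(P)·Q + P·D_k(Q)) with D_k(X_{inl a}) = (if a = k then X_{inr k} else 0) and D_k(X_{inr a}) = 0. Then for every n and every word w : Fin n → Fin N, viewed in List Λ via inl: D_k(ψ(w)) = ∑_{j ∈ Fin n} (if w j = k then 1 else 0) · ψ(w⟨j ↦ inr k⟩), where w⟨j ↦ inr k⟩ is the word w with its j-th letter replaced by the primed letter inr k. (This is the identity ∂_k(ψ_{i₁,…,iₙ})#X_q^{k'}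 = ∑_j 1_{i_j=k} ψ_{i₁,…,i_j',…,iₙ} proved by induction in the paper's Proposition on the number operator.) -/
/-- The Wick polynomials `ψ : List Λ → FreeAlgebra ℂ Λ`, defined recursively by `ψ([]) = 1` and
`ψ(a :: w) = X_a · ψ(w) − ∑_{j < length w} q^j · [a = w_j] · ψ(w with its j-th letter deleted)`. -/
noncomputable def wick {Λ : Type*} [DecidableEq Λ] (q : ℝ) : List Λ → FreeAlgebra ℂ Λ
  | [] => 1
  | a :: w => FreeAlgebra.ι ℂ a * wick q w -
      ∑ j : Fin w.length,
        ((q : ℂ) ^ (j : ℕ) * (if a = w.get j then 1 else 0)) • wick q (w.eraseIdx j)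
termination_by l => l.length
decreasing_by
  · simp
  · simp [List.length_eraseIdx]

variable {Λ : Type*} [DecidableEq Λ] (q : ℝ)

theorem wick_nil : wick (Λ := Λ) q [] = 1 := by rw [wick]

theorem wick_cons (a : Λ) (w : List Λ) (d : Λ) : wick q (a :: w) =
    FreeAlgebra.ι ℂ a * wick q w -
      ∑ j ∈ Finset.range w.length,
        ((q : ℂ) ^ j * (if a = w.getD j d then 1 else 0)) • wick q (w.eraseIdx j) := by
  rw [wick]
  congr 1
  rw [← Fin.sum_univ_eq_sum_range
    (fun j => ((q : ℂ) ^ j * (if a = w.getD j d then 1 else 0)) • wick q (w.eraseIdx j))]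
  apply Finset.sum_congr rfl
  intro j _
  rw [List.getD_eq_getElem _ _ j.isLt]
  simp [List.get_eq_getElem]

-- check names

theorem set_eraseIdx (l : List Λ) (b : Λ) (i j : ℕ) (hi : i < l.length) (hj : j < l.length)
    (hne : i ≠ j) :
    (l.set j b).eraseIdx i = (l.eraseIdx i).set (if j < i then j else j - 1) b := by
  apply List.ext_getElem
  · simp [List.length_eraseIdx, hi, hj]
  · intro n h1 h2
    simp [List.length_eraseIdx, hi, hj] at h1 h2
    by_cases hji : j < i <;>
      simp only [hji, if_true, if_false, List.getElem_eraseIdx, List.getElem_set] <;>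
      split_ifs <;> first | rfl | omega | (exact (if_neg (by omega)).symm)

variable {N : ℕ}

theorem getD_map_inl (t : List (Fin N)) (k : Fin N) (i : ℕ) (hi : i < t.length) :
    (t.map Sum.inl).getD i (Sum.inr k) = Sum.inl (t.getD i k) := by
  rw [List.getD_eq_getElem _ _ (by simpa using hi), List.getD_eq_getElem _ _ hi]
  simp

theorem wick_inr_cons (q : ℝ) (k : Fin N) (t : List (Fin N)) :
    wick q ((Sum.inr k : Fin N ⊕ Fin N) :: t.map Sum.inl) =
      FreeAlgebra.ι ℂ (Sum.inr k : Fin N ⊕ Fin N) * wick q (t.map Sum.inl) := by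
  rw [wick_cons q _ _ (Sum.inr k), sub_eq_self]
  apply Finset.sum_eq_zero
  intro i hi
  rw [Finset.mem_range, List.length_map] at hi
  rw [getD_map_inl t k i hi]
  simp

theorem map_eraseIdx' {α β : Type*} (f : α → β) : ∀ (l : List α) (i : ℕ),
    (l.map f).eraseIdx i = (l.eraseIdx i).map f
  | [], _ => by simp
  | a :: l, 0 => by simp
  | a :: l, (n+1) => by simp [List.eraseIdx_cons_succ, map_eraseIdx' f l n]

theorem term_eq (q : ℝ) (k a : Fin N) (t : List (Fin N)) (i j p : ℕ)
    (hi : i < t.length) (hj : j < t.length) (hp : p < t.length - 1) (hij : i ≠ j)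
    (hjp : j = if p < i then p else p + 1) :
    (((q:ℂ)^i * (if Sum.inl a = (t.map Sum.inl).getD i (Sum.inr k) then 1 else 0)) *
        (if (t.eraseIdx i).getD p k = k then (1:ℂ) else 0)) •
      wick q (((t.eraseIdx i).map Sum.inl).set p (Sum.inr k))
    = ((if t.getD j k = k then (1:ℂ) else 0) *
        ((q:ℂ)^i * (if Sum.inl a = ((t.map Sum.inl).set j (Sum.inr k)).getD i (Sum.inr k)
          then 1 else 0))) •
      wick q (((t.map Sum.inl).set j (Sum.inr k)).eraseIdx i) := by
  have h1 : ((t.map Sum.inl).set j (Sum.inr k)).getD i (Sum.inr k)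
      = (t.map Sum.inl).getD i (Sum.inr k) := by
    rw [List.getD_eq_getElem _ _ (by simpa using hi), List.getElem_set,
      if_neg (Ne.symm hij), List.getD_eq_getElem _ _ (by simpa using hi)]
  have h2 : (t.eraseIdx i).getD p k = t.getD j k := by
    rw [List.getD_eq_getElem _ _ (by rw [List.length_eraseIdx, if_pos hi]; omega),
      List.getElem_eraseIdx, List.getD_eq_getElem _ _ hj]
    rcases Nat.lt_or_ge p i with h | h
    · rw [if_pos h] at hjp
      subst hjp
      rw [dif_pos h]
    · rw [if_neg (by omega)] at hjp
      subst hjp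
      rw [dif_neg (by omega)]
  have h3 : ((t.map Sum.inl).set j (Sum.inr k)).eraseIdx i
      = ((t.eraseIdx i).map Sum.inl).set p (Sum.inr k) := by
    rw [set_eraseIdx _ _ i j (by simpa using hi) (by simpa using hj) hij, map_eraseIdx']
    congr 1
    split_ifs at hjp ⊢ <;> omega
  rw [h1, h2, h3]
  congr 1
  ring

theorem crux (q : ℝ) (k a : Fin N) (t : List (Fin N)) :
    ∑ i ∈ Finset.range t.length,
      (((q:ℂ)^i * (if Sum.inl a = (t.map Sum.inl).getD i (Sum.inr k) then 1 else 0)) •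
        ∑ p ∈ Finset.range (t.eraseIdx i).length,
          (if (t.eraseIdx i).getD p k = k then (1:ℂ) else 0) •
            wick q (((t.eraseIdx i).map Sum.inl).set p (Sum.inr k)))
    = ∑ j ∈ Finset.range t.length,
        ((if t.getD j k = k then (1:ℂ) else 0) •
          ∑ i ∈ Finset.range t.length,
            ((q:ℂ)^i * (if Sum.inl a = ((t.map Sum.inl).set j (Sum.inr k)).getD i (Sum.inr k)
                then 1 else 0)) •
              wick q (((t.map Sum.inl).set j (Sum.inr k)).eraseIdx i)) := by
  simp only [Finset.smul_sum, smul_smul]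
  trans ∑ i ∈ Finset.range t.length, ∑ p ∈ Finset.range (t.length - 1),
      (((q:ℂ)^i * (if Sum.inl a = (t.map Sum.inl).getD i (Sum.inr k) then 1 else 0)) *
        (if (t.eraseIdx i).getD p k = k then (1:ℂ) else 0)) •
          wick q (((t.eraseIdx i).map Sum.inl).set p (Sum.inr k))
  · apply Finset.sum_congr rfl
    intro i hi
    rw [List.length_eraseIdx, if_pos (Finset.mem_range.mp hi)]
  rw [← Finset.sum_product', ← Finset.sum_product']
  rw [← Finset.sum_filter_of_ne (p := fun x => x.2 ≠ x.1)
    (s := Finset.range t.length ×ˢ Finset.range t.length)]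
  · apply Finset.sum_nbij' (i := fun x => ((if x.2 < x.1 then x.2 else x.2 + 1), x.1))
      (j := fun x => (x.2, if x.1 < x.2 then x.1 else x.1 - 1))
    · intro x hx
      simp only [Finset.mem_product, Finset.mem_range, Finset.mem_filter] at hx ⊢
      split_ifs <;> omega
    · intro x hx
      simp only [Finset.mem_product, Finset.mem_range, Finset.mem_filter] at hx ⊢
      split_ifs <;> omega
    · intro x hx
      simp only [Finset.mem_product, Finset.mem_range] at hx
      obtain ⟨i, p⟩ := x
      simp only [Prod.mk.injEq] at hx ⊢
      refine ⟨?_, ?_⟩ <;> first | trivial | (split_ifs <;> omega)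
    · intro x hx
      simp only [Finset.mem_filter, Finset.mem_product, Finset.mem_range] at hx
      obtain ⟨j, i⟩ := x
      simp only [Prod.mk.injEq] at hx ⊢
      refine ⟨?_, ?_⟩ <;> first | trivial | (split_ifs <;> omega)
    · intro x hx
      simp only [Finset.mem_product, Finset.mem_range] at hx
      obtain ⟨i, p⟩ := x
      obtain ⟨hi, hp⟩ := hx
      exact term_eq q k a t i _ p hi (by split_ifs <;> omega) hp (by split_ifs <;> omega) rfl
  · intro x hx h0
    simp only [Finset.mem_product, Finset.mem_range] at hx
    by_contra hc
    apply h0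
    rw [hc]
    have hlt : x.1 < ((List.map Sum.inl t).set x.1 (Sum.inr k)).length := by
      simpa using hx.1
    rw [List.getD_eq_getElem _ _ hlt, List.getElem_set, if_pos rfl]
    simp

theorem main (q : ℝ)
    (D : Fin N → (FreeAlgebra ℂ (Fin N ⊕ Fin N) →ₗ[ℂ] FreeAlgebra ℂ (Fin N ⊕ Fin N)))
    (hDLeib : ∀ k (P Q : FreeAlgebra ℂ (Fin N ⊕ Fin N)),
      D k (P * Q) = D k P * Q + P * D k Q)
    (hDinl : ∀ k a, D k (FreeAlgebra.ι ℂ (Sum.inl a : Fin N ⊕ Fin N)) =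
      if a = k then FreeAlgebra.ι ℂ (Sum.inr k : Fin N ⊕ Fin N) else 0)
    (k : Fin N) :
    ∀ (m : ℕ) (t : List (Fin N)), t.length ≤ m →
    D k (wick q (t.map Sum.inl)) =
      ∑ j ∈ Finset.range t.length, (if t.getD j k = k then (1 : ℂ) else 0) •
        wick q ((t.map Sum.inl).set j (Sum.inr k)) := by
  have hD1 : D k 1 = 0 := by
    have := hDLeib k 1 1
    simp at this
    linear_combination (norm := module) this
  intro m
  induction m with
  | zero =>
    intro t ht
    rw [Nat.le_zero, List.length_eq_zero_iff] at ht
    subst ht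
    simp [wick_nil, hD1]
  | succ m ih =>
    intro t ht
    match t with
    | [] => simp [wick_nil, hD1]
    | a :: t =>
      simp only [List.length_cons, Nat.succ_le_succ_iff] at ht
      rw [List.map_cons, wick_cons q _ _ (Sum.inr k), map_sub, hDLeib, hDinl,
        map_sum, List.length_map]
      have key : ∀ i : ℕ, D k (wick q ((t.eraseIdx i).map Sum.inl)) =
          ∑ p ∈ Finset.range (t.eraseIdx i).length,
            (if (t.eraseIdx i).getD p k = k then (1 : ℂ) else 0) •
              wick q (((t.eraseIdx i).map Sum.inl).set p (Sum.inr k)) := by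
        intro i
        exact ih (t.eraseIdx i)
          (le_trans (by rw [List.length_eraseIdx]; split_ifs <;> omega) ht)
      simp only [map_smul, map_eraseIdx', key, ih t ht]
      rw [List.length_cons, Finset.sum_range_succ']
      simp only [List.getD_cons_zero, List.getD_cons_succ, List.set_cons_zero,
        List.set_cons_succ, wick_inr_cons]
      have hwc : ∀ j : ℕ, wick q (Sum.inl a :: (t.map Sum.inl).set j (Sum.inr k)) =
          FreeAlgebra.ι ℂ (Sum.inl a : Fin N ⊕ Fin N) *
              wick q ((t.map Sum.inl).set j (Sum.inr k)) -
            ∑ i ∈ Finset.range t.length,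
              ((q:ℂ)^i * (if Sum.inl a =
                  ((t.map Sum.inl).set j (Sum.inr k)).getD i (Sum.inr k) then 1 else 0)) •
                wick q (((t.map Sum.inl).set j (Sum.inr k)).eraseIdx i) := by
        intro j
        rw [wick_cons q _ _ (Sum.inr k), List.length_set, List.length_map]
      simp only [hwc, smul_sub, Finset.sum_sub_distrib]
      rw [← crux q k a t]
      rw [Finset.mul_sum]
      simp only [mul_smul_comm]
      have hite : (if a = k then FreeAlgebra.ι ℂ (Sum.inr k : Fin N ⊕ Fin N) else 0) *
          wick q (t.map Sum.inl) = (if a = k then (1:ℂ) else 0) •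
            (FreeAlgebra.ι ℂ (Sum.inr k : Fin N ⊕ Fin N) * wick q (t.map Sum.inl)) := by
        split_ifs <;> simp
      rw [hite]
      abel

theorem final {N n : ℕ} (q : ℝ)
    (D : Fin N → (FreeAlgebra ℂ (Fin N ⊕ Fin N) →ₗ[ℂ] FreeAlgebra ℂ (Fin N ⊕ Fin N)))
    (hDLeib : ∀ k (P Q : FreeAlgebra ℂ (Fin N ⊕ Fin N)),
      D k (P * Q) = D k P * Q + P * D k Q)
    (hDinl : ∀ k a, D k (FreeAlgebra.ι ℂ (Sum.inl a : Fin N ⊕ Fin N)) =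
      if a = k then FreeAlgebra.ι ℂ (Sum.inr k : Fin N ⊕ Fin N) else 0)
    (k : Fin N) (w : Fin n → Fin N) :
    D k (wick q ((List.ofFn w).map Sum.inl)) =
      ∑ j : Fin n, (if w j = k then (1 : ℂ) else 0) •
        wick q (List.ofFn fun p => if p = j then (Sum.inr k : Fin N ⊕ Fin N)
          else Sum.inl (w p)) := by
  rw [main q D hDLeib hDinl k n (List.ofFn w) (by simp), List.length_ofFn,
    ← Fin.sum_univ_eq_sum_range (fun j => (if (List.ofFn w).getD j k = k then (1:ℂ) else 0) •
      wick q (((List.ofFn w).map Sum.inl).set j (Sum.inr k)))]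
  apply Finset.sum_congr rfl
  intro j _
  have h1 : (List.ofFn w).getD (j : ℕ) k = w j := by
    rw [List.getD_eq_getElem _ _ (by simp), List.getElem_ofFn]
  have h2 : ((List.ofFn w).map Sum.inl).set (j : ℕ) (Sum.inr k) =
      List.ofFn fun p => if p = j then (Sum.inr k : Fin N ⊕ Fin N) else Sum.inl (w p) := by
    apply List.ext_getElem
    · simp
    · intro i hi1 hi2
      have hin : i < n := by simpa using hi2
      rw [List.getElem_set, List.getElem_ofFn]
      simp only [List.getElem_map, List.getElem_ofFn]
      by_cases h : (j : ℕ) = i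
      · rw [if_pos h, if_pos (by simp [Fin.ext_iff, h.symm])]
      · rw [if_neg h, if_neg (by simp [Fin.ext_iff]; omega)]
  rw [h1, h2]

/-- On the doubled alphabet `Λ = Fin N ⊕ Fin N` (an unprimed and a primed copy), let `D_k` be
the unique derivation with `D_k(X_{inl a}) = [a = k]·X_{inr k}` and `D_k(X_{inr a}) = 0`.  Then
for any word `w : Fin n → Fin N` (viewed in `List Λ` via `inl`),
`D_k(ψ(w)) = ∑_j [w j = k] · ψ(w⟨j ↦ inr k⟩)`, where `w⟨j ↦ inr k⟩` is `w` with its `j`-th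
letter replaced by the primed letter `inr k`.  (The identity
`∂_k(ψ_{i₁,…,iₙ}) # X_q^{k'} = ∑_j 1_{i_j=k} ψ_{i₁,…,i_j',…,iₙ}`.) -/
theorem wick_derivation_marked {N n : ℕ} (q : ℝ)
    (D : Fin N → (FreeAlgebra ℂ (Fin N ⊕ Fin N) →ₗ[ℂ] FreeAlgebra ℂ (Fin N ⊕ Fin N)))
    (hDLeib : ∀ k (P Q : FreeAlgebra ℂ (Fin N ⊕ Fin N)),
      D k (P * Q) = D k P * Q + P * D k Q)
    (hDinl : ∀ k a, D k (FreeAlgebra.ι ℂ (Sum.inl a : Fin N ⊕ Fin N)) =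
      if a = k then FreeAlgebra.ι ℂ (Sum.inr k : Fin N ⊕ Fin N) else 0)
    (hDinr : ∀ k a, D k (FreeAlgebra.ι ℂ (Sum.inr a : Fin N ⊕ Fin N)) = 0)
    (k : Fin N) (w : Fin n → Fin N) :
    D k (wick q ((List.ofFn w).map Sum.inl)) =
      ∑ j : Fin n, (if w j = k then (1 : ℂ) else 0) •
        wick q (List.ofFn fun p => if p = j then (Sum.inr k : Fin N ⊕ Fin N)
          else Sum.inl (w p)) := by
  exact final q D hDLeib hDinl k w
end
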